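/- If (A_n) is a strongly polynomial sequence of finite graphs and |V(A_n)| = P(n) for a polynomial P of degree d, then the number of isomorphism classes of k-vertex graphs occurring as induced subgraphs of some A_n is at most Σ_{i=1}^{kd+1} C(P(i), k); in particular it is 2^{o(k²)} as k → ∞, so the hereditary class of induced subgraphs of the A_n's is random-free in the sense of Lovász–Szegedy. -/

import Mathlib

/-!
For a `k`-vertex graph `F`, the induced count `ind(F, A_n)` is a polynomial `Q_F(n)` bounded by
`P(n)^k`, so `deg Q_F ≤ kd`. A nonzero polynomial of degree at most `kd` cannot vanish at all of
`1, …, kd + 1`, hence `F` already occurs in some `A_m` with `m ≤ kd + 1`. Each isomorphism class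
is then represented by the graph that such an `A_m` induces on one of its `k`-subsets of vertices,
which gives the bound by `Σ_{i ≤ kd+1} C(P(i), k)`.
-/

open SimpleGraph

noncomputable def indCount {α β : Type*} (F : SimpleGraph α) (A : SimpleGraph β) : ℕ :=
  Nat.card (F ↪g A)

def graphIsoSetoid (α : Type*) (Pred : SimpleGraph α → Prop) :
    Setoid {G : SimpleGraph α // Pred G} where
  r G H := Nonempty (G.1 ≃g H.1)
  iseqv := ⟨fun _ => ⟨Iso.refl⟩, fun ⟨e⟩ => ⟨e.symm⟩, fun ⟨e⟩ ⟨f⟩ => ⟨e.trans f⟩⟩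

open Polynomial Filter

namespace Polynomial

section Ordered

variable {𝕜 : Type*} [NormedField 𝕜] [LinearOrder 𝕜] [IsStrictOrderedRing 𝕜] [OrderTopology 𝕜]
  [Archimedean 𝕜]

theorem leadingCoeff_nonneg_of_eval_natCast_nonneg {Q : 𝕜[X]} (h : ∀ n : ℕ, 0 ≤ Q.eval (n : 𝕜)) :
    0 ≤ Q.leadingCoeff := by
  by_contra! hneg
  rcases lt_or_ge 0 Q.degree with hdeg | hdeg
  · have hbot := (Q.tendsto_atBot_of_leadingCoeff_nonpos hdeg hneg.le).comp
      tendsto_natCast_atTop_atTop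
    obtain ⟨n, hn⟩ := (hbot.eventually (eventually_lt_atBot 0)).exists
    exact (h n).not_gt hn
  · rw [leadingCoeff, natDegree_eq_zero_iff_degree_le_zero.mpr hdeg, coeff_zero_eq_eval_zero]
      at hneg
    exact (h 0).not_gt (by simpa using hneg)

theorem natDegree_le_of_eval_natCast_le {Q R : 𝕜[X]} (hQ : ∀ n : ℕ, 0 ≤ Q.eval (n : 𝕜))
    (hle : ∀ n : ℕ, Q.eval (n : 𝕜) ≤ R.eval (n : 𝕜)) : Q.natDegree ≤ R.natDegree := by
  by_contra! hlt
  have hQ0 : Q ≠ 0 := ne_zero_of_natDegree_gt hlt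
  -- `R - Q` has the leading term of `-Q`, yet takes nonnegative values.
  have hRQ : 0 ≤ (R - Q).leadingCoeff :=
    leadingCoeff_nonneg_of_eval_natCast_nonneg fun n => by
      simpa [eval_sub, sub_nonneg] using hle n
  rw [leadingCoeff_sub_of_degree_lt' (degree_lt_degree hlt)] at hRQ
  exact leadingCoeff_ne_zero.mpr hQ0
    (le_antisymm (neg_nonneg.mp hRQ) (leadingCoeff_nonneg_of_eval_natCast_nonneg hQ))

end Ordered

theorem exists_mem_Icc_eval_natCast_ne_zero {R : Type*} [CommRing R] [IsDomain R] [CharZero R]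
    {Q : R[X]} (hQ : Q ≠ 0) : ∃ m ∈ Finset.Icc 1 (Q.natDegree + 1), Q.eval (m : R) ≠ 0 := by
  by_contra! h
  refine hQ (eq_zero_of_natDegree_lt_card_of_eval_eq_zero Q
    (f := fun m : Finset.Icc 1 (Q.natDegree + 1) => (m : R))
    (Nat.cast_injective.comp Subtype.val_injective) (fun m => h m m.2) ?_)
  simp

end Polynomial

section InducedCount

variable {α β : Type*} (F : SimpleGraph α) (A : SimpleGraph β)

theorem indCount_le_card_pow [Fintype α] [Fintype β] :
    indCount F A ≤ Fintype.card β ^ Fintype.card α :=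
  calc Nat.card (F ↪g A) ≤ Nat.card (α → β) :=
        Nat.card_le_card_of_injective _ DFunLike.coe_injective
    _ = Fintype.card β ^ Fintype.card α := by
        rw [Nat.card_fun, Nat.card_eq_fintype_card, Nat.card_eq_fintype_card]

theorem indCount_pos_iff [Finite α] [Finite β] : 0 < indCount F A ↔ Nonempty (F ↪g A) := by
  have : Finite (F ↪g A) := Finite.of_injective _ DFunLike.coe_injective
  exact Nat.card_pos_iff.trans (and_iff_left this)

end InducedCount

theorem SimpleGraph.Embedding.nonempty_iso_of_range_eq {α β γ : Type*} {G : SimpleGraph α}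
    {H : SimpleGraph β} {B : SimpleGraph γ} (f : G ↪g B) (g : H ↪g B)
    (h : Set.range f = Set.range g) : Nonempty (G ≃g H) := by
  have e := f.isoInduceRange
  rw [h] at e
  exact ⟨e.trans g.isoInduceRange.symm⟩

theorem Finset.exists_embedding_range_eq_of_card_eq {α β : Type*} [Fintype α] {s : Finset β}
    (hs : s.card = Fintype.card α) : ∃ e : α ↪ β, Set.range e = s := by
  let e : α ≃ s := Fintype.equivOfCardEq (by rw [Fintype.card_coe, hs])
  refine ⟨e.toEmbedding.trans (.subtype (· ∈ s)), ?_⟩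
  rw [Function.Embedding.coe_trans, Set.range_comp, Equiv.coe_toEmbedding, Equiv.range_eq_univ,
    Set.image_univ]
  simp

theorem exists_embedding_mem_Icc_of_indCount_eq_eval {α : Type*} [Fintype α] {V : ℕ → Type*}
    [∀ n, Fintype (V n)] {A : ∀ n, SimpleGraph (V n)} {F : SimpleGraph α} {P Q : ℚ[X]}
    (hP : ∀ n : ℕ, (Fintype.card (V n) : ℚ) = P.eval (n : ℚ))
    (hQ : ∀ n : ℕ, (indCount F (A n) : ℚ) = Q.eval (n : ℚ)) (hF : ∃ n, Nonempty (F ↪g A n)) :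
    ∃ m ∈ Finset.Icc 1 (Fintype.card α * P.natDegree + 1), Nonempty (F ↪g A m) := by
  have hQ0 : Q ≠ 0 := by
    rintro rfl
    obtain ⟨n, hn⟩ := hF
    have hpos := (indCount_pos_iff F (A n)).2 hn
    have hzero := hQ n
    rw [eval_zero, Nat.cast_eq_zero] at hzero
    omega
  have hdeg : Q.natDegree ≤ Fintype.card α * P.natDegree := by
    refine (natDegree_le_of_eval_natCast_le (R := P ^ Fintype.card α)
      (fun n => hQ n ▸ Nat.cast_nonneg _) fun n => ?_).trans natDegree_pow_le
    rw [← hQ, eval_pow, ← hP]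
    exact_mod_cast indCount_le_card_pow F (A n)
  obtain ⟨m, hm, hQm⟩ := exists_mem_Icc_eval_natCast_ne_zero hQ0
  refine ⟨m, Finset.Icc_subset_Icc_right (by omega) hm, (indCount_pos_iff F (A m)).1 ?_⟩
  refine Nat.pos_of_ne_zero fun h => hQm ?_
  rw [← hQ, h, Nat.cast_zero]

theorem card_quotient_le_sum_choose {α ι : Type*} [Fintype α] {V : ι → Type*}
    [∀ i, Fintype (V i)] {A : ∀ i, SimpleGraph (V i)} (S : Finset ι)
    (hS : ∀ F : SimpleGraph α, (∃ n, Nonempty (F ↪g A n)) → ∃ m ∈ S, Nonempty (F ↪g A m)) :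
    Nat.card (Quotient (graphIsoSetoid α fun G => ∃ n, Nonempty (G ↪g A n)))
      ≤ ∑ i ∈ S, (Fintype.card (V i)).choose (Fintype.card α) := by
  -- Every class is represented by the graph that some `A i` with `i ∈ S` induces on a
  -- set of `|α|` vertices.
  choose e he using fun (i : S) (s : {s : Finset (V i) // s.card = Fintype.card α}) =>
    Finset.exists_embedding_range_eq_of_card_eq s.2
  let induced : (Σ i : S, {s : Finset (V i) // s.card = Fintype.card α}) →
      Quotient (graphIsoSetoid α fun G => ∃ n, Nonempty (G ↪g A n)) :=
    fun ⟨i, s⟩ => ⟦⟨(A i).comap (e i s), i, ⟨Embedding.comap _ _⟩⟩⟧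
  have hsurj : Function.Surjective induced := by
    rintro ⟨G, hG⟩
    obtain ⟨m, hm, ⟨f⟩⟩ := hS G hG
    let s : {s : Finset (V m) // s.card = Fintype.card α} :=
      ⟨Finset.univ.map f.toEmbedding, by rw [Finset.card_map, Finset.card_univ]⟩
    refine ⟨⟨⟨m, hm⟩, s⟩, Quotient.sound ?_⟩
    refine (Embedding.comap _ _).nonempty_iso_of_range_eq f ?_
    change Set.range (e ⟨m, hm⟩ s) = _
    rw [he]
    simp only [s, Finset.coe_map, RelEmbedding.coe_toEmbedding, Finset.coe_univ, Set.image_univ]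
  calc _ ≤ Nat.card (Σ i : S, {s : Finset (V i) // s.card = Fintype.card α}) :=
        Nat.card_le_card_of_surjective _ hsurj
    _ = ∑ i ∈ S, (Fintype.card (V i)).choose (Fintype.card α) := by
      rw [Nat.card_eq_fintype_card, Fintype.card_sigma, ← Finset.sum_coe_sort S]
      simp only [Fintype.card_finset_len]

/-- if `(A_n)` is strongly polynomial (in the induced-count sense) with
`|V(A_n)| = P(n)`, `d = deg P`, then every `k`-vertex graph occurring as an induced
subgraph of some `A_n` occurs in some `A_m` with `m ≤ kd+1`, and the number of
isomorphism classes of `k`-vertex induced subgraphs of the `A_n` is at most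
`Σ_{i=1}^{kd+1} C(P(i), k)`. -/
theorem stronglyPolynomial_few_induced_subgraphs (V : ℕ → Type) [∀ n, Fintype (V n)]
    (A : ∀ n, SimpleGraph (V n))
    (hsp : ∀ (W : Type) [Fintype W] (F : SimpleGraph W),
      ∃ Q : Polynomial ℚ, ∀ n : ℕ, (indCount F (A n) : ℚ) = Q.eval (n : ℚ))
    (P : Polynomial ℚ) (hP : ∀ n : ℕ, (Fintype.card (V n) : ℚ) = P.eval (n : ℚ))
    (k : ℕ) :
    (∀ F : SimpleGraph (Fin k), (∃ n, Nonempty (F ↪g A n)) →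
        ∃ m, m ≤ k * P.natDegree + 1 ∧ Nonempty (F ↪g A m))
    ∧ Nat.card
        (Quotient (graphIsoSetoid (Fin k) (fun G => ∃ n, Nonempty (G ↪g A n))))
      ≤ ∑ i ∈ Finset.Icc 1 (k * P.natDegree + 1), (Fintype.card (V i)).choose k := by
  have hsmall : ∀ F : SimpleGraph (Fin k), (∃ n, Nonempty (F ↪g A n)) →
      ∃ m ∈ Finset.Icc 1 (k * P.natDegree + 1), Nonempty (F ↪g A m) := fun F hF => by
    obtain ⟨Q, hQ⟩ := hsp (Fin k) F
    simpa using exists_embedding_mem_Icc_of_indCount_eq_eval hP hQ hF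
  refine ⟨fun F hF => ?_, ?_⟩
  · obtain ⟨m, hm, hFm⟩ := hsmall F hF
    exact ⟨m, (Finset.mem_Icc.mp hm).2, hFm⟩
  · simpa using card_quotient_le_sum_choose _ hsmall
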